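/- Let φ, χ, ψ be real numbers that are pairwise distinct modulo π. If φ + χ + ψ ≡ 0 (mod π), then the three lines ℓ_φ, ℓ_χ, ℓ_ψ are concurrent, i.e. ℓ_φ ∩ ℓ_χ ∩ ℓ_ψ ≠ ∅. -/
import Mathlib


open Real

/-- The tangent line `ℓ_φ = {e^{-2iφ} + t e^{iφ} : t ∈ ℝ}` of the deltoid. -/
noncomputable def tline (φ : ℝ) : Set ℂ :=
  {w : ℂ | ∃ t : ℝ, w = Complex.exp (((-(2 * φ) : ℝ) : ℂ) * Complex.I) +
      (t : ℂ) * Complex.exp ((φ : ℂ) * Complex.I)}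

theorem stmt_5 (φ χ ψ : ℝ)
    (h1 : ∀ k : ℤ, χ - φ ≠ (k : ℝ) * π)
    (h2 : ∀ k : ℤ, ψ - φ ≠ (k : ℝ) * π)
    (h3 : ∀ k : ℤ, ψ - χ ≠ (k : ℝ) * π)
    (hsum : ∃ k : ℤ, φ + χ + ψ = (k : ℝ) * π) :
    (tline φ ∩ tline χ ∩ tline ψ).Nonempty := by
  obtain ⟨k, hk⟩ := hsum
  have hψ : ψ = (k : ℝ) * π - φ - χ := by linarith
  subst hψ
  refine ⟨Complex.exp (((-(2 * φ) : ℝ) : ℂ) * Complex.I)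
      + Complex.exp (((-(2 * χ) : ℝ) : ℂ) * Complex.I)
      + Complex.exp (((2 * (φ + χ) : ℝ) : ℂ) * Complex.I), ⟨?_, ?_⟩, ?_⟩
  · refine ⟨2 * Real.cos (φ + 2 * χ), ?_⟩
    push_cast
    rw [Complex.cos]
    ring_nf
    rw [← Complex.exp_add, ← Complex.exp_add]
    ring_nf
  · refine ⟨2 * Real.cos (χ + 2 * φ), ?_⟩
    push_cast
    rw [Complex.cos]
    ring_nf
    rw [← Complex.exp_add, ← Complex.exp_add]
    ring_nf
  · refine ⟨(-1) ^ k * (2 * Real.cos (φ - χ)), ?_⟩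
    have e1 : Complex.exp (((-(2 * ((k : ℝ) * π - φ - χ)) : ℝ) : ℂ) * Complex.I)
        = Complex.exp (((2 * (φ + χ) : ℝ) : ℂ) * Complex.I) := by
      have : ((-(2 * ((k : ℝ) * π - φ - χ)) : ℝ) : ℂ) * Complex.I
          = ((2 * (φ + χ) : ℝ) : ℂ) * Complex.I + ((-k : ℤ) : ℂ) * (2 * (π : ℂ) * Complex.I) := by
        push_cast; ring
      rw [this, Complex.exp_add, Complex.exp_int_mul_two_pi_mul_I, mul_one]
    have e2 : Complex.exp ((((k : ℝ) * π - φ - χ : ℝ) : ℂ) * Complex.I)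
        = (-1 : ℂ) ^ k * Complex.exp (((-(φ + χ) : ℝ) : ℂ) * Complex.I) := by
      have : ((((k : ℝ) * π - φ - χ : ℝ)) : ℂ) * Complex.I
          = (k : ℂ) * (↑π * Complex.I) + ((-(φ + χ) : ℝ) : ℂ) * Complex.I := by
        push_cast; ring
      rw [this, Complex.exp_add, Complex.exp_int_mul, Complex.exp_pi_mul_I]
    rw [e1, e2]
    have hm : ((-1 : ℂ) ^ k) * ((-1 : ℂ) ^ k) = 1 := by
      rw [← zpow_add₀ (by norm_num : (-1 : ℂ) ≠ 0)]
      have : k + k = 2 * k := by ring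
      rw [this, zpow_mul]
      norm_num
    have hm2 : ((-1 : ℂ) ^ k) ^ 2 = 1 := by rw [sq]; exact hm
    push_cast
    rw [Complex.cos]
    ring_nf
    simp only [hm2, one_mul, ← Complex.exp_add]
    ring_nf
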